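/- Fix n ≥ 1 and a quadratic control system with matrices E, A ∈ ℂ^{n×n}, B ∈ ℂ^n, and Q ∈ ℂ^{n×n²}. Let ω ∈ ℝ, α ∈ ℂ, and M ≥ 1, and assume that m·(iω)·E − A is invertible for every m ∈ {1,…,M}. Define the vectors G_m ∈ ℂ^n recursively by G_1 = (iωE − A)⁻¹B and, for 2 ≤ m ≤ M, G_m = (m·iω·E − A)⁻¹ · Q · (Σ_{k=1}^{m−1} G_k ⊗ G_{m−k}). Let x : ℝ → ℂ^n be the truncated harmonic expansion x(t) = Σ_{m=1}^{M} α^m · e^{m·iω·t} · G_m. Then x is differentiable and for every t ∈ ℝ: E·x′(t) = A·x(t) + Q·(x(t)⊗x(t)) + α·e^{iωt}·B − Σ_{m=M+1}^{2M} α^m · e^{m·iω·t} · Q·(Σ_{k=m−M}^{M} G_k ⊗ G_{m−k}); in other words, x satisfies the quadratic state equation E·ẋ = A·x + Q·(x⊗x) + B·u with input u(t) = α·e^{iωt} up to a residual consisting only of harmonics of order m > M, each carrying a factor α^m. -/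

import Mathlib

open Matrix Finset Complex

noncomputable section

/-- Kronecker product of two vectors in `ℂ^n`, indexed by pairs. -/
def kron {n : ℕ} (v w : Fin n → ℂ) : Fin n × Fin n → ℂ := fun p => v p.1 * w p.2

lemma mulVec_sum'' {r c : Type*} [Fintype c] {ι : Type*} (Q : Matrix r c ℂ)
    (s : Finset ι) (v : ι → c → ℂ) :
    Q.mulVec (∑ i ∈ s, v i) = ∑ i ∈ s, Q.mulVec (v i) :=
  map_sum Q.mulVecLin v s

lemma inv_cancel' {n : ℕ} (X : Matrix (Fin n) (Fin n) ℂ) (h : IsUnit X.det)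
    (v : Fin n → ℂ) : X.mulVec (X⁻¹.mulVec v) = v := by
  rw [Matrix.mulVec_mulVec, Matrix.mul_nonsing_inv _ h, Matrix.one_mulVec]

/-- the truncated harmonic expansion
`x(t) = Σ_{m=1}^{M} αᵐ e^{m·iω·t} G_m`, with `G_m` defined by the harmonic-balance
recursion, satisfies the quadratic state equation
`E·ẋ = A·x + Q·(x⊗x) + B·u`, `u(t) = α·e^{iωt}`,
up to a residual consisting only of harmonics of order `m > M`. -/
theorem stmt_9 {n : ℕ} (hn : 1 ≤ n)
    (E A : Matrix (Fin n) (Fin n) ℂ) (B : Fin n → ℂ)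
    (Q : Matrix (Fin n) (Fin n × Fin n) ℂ)
    (ω : ℝ) (α : ℂ) (M : ℕ) (hM : 1 ≤ M)
    (hinv : ∀ m ∈ Finset.Icc 1 M, IsUnit (((m : ℂ) * (Complex.I * ω)) • E - A).det)
    (G : ℕ → Fin n → ℂ)
    (hG1 : G 1 = ((Complex.I * (ω : ℂ)) • E - A)⁻¹.mulVec B)
    (hGm : ∀ m, 2 ≤ m → m ≤ M →
      G m = (((m : ℂ) * (Complex.I * ω)) • E - A)⁻¹.mulVec
        (Q.mulVec (∑ k ∈ Finset.Icc 1 (m - 1), kron (G k) (G (m - k)))))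
    (x : ℝ → Fin n → ℂ)
    (hx : ∀ t i, x t i =
      ∑ m ∈ Finset.Icc 1 M, α ^ m * Complex.exp ((m : ℂ) * Complex.I * ω * t) * G m i) :
    ∃ x' : ℝ → Fin n → ℂ,
      (∀ t i, HasDerivAt (fun τ : ℝ => x τ i) (x' t i) t) ∧
      ∀ t : ℝ, E.mulVec (x' t)
        = A.mulVec (x t) + Q.mulVec (kron (x t) (x t))
          + (α * Complex.exp (Complex.I * ω * t)) • B
          - ∑ m ∈ Finset.Icc (M + 1) (2 * M),
              (α ^ m * Complex.exp ((m : ℂ) * Complex.I * ω * t)) •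
                Q.mulVec (∑ k ∈ Finset.Icc (m - M) M, kron (G k) (G (m - k))) := by
  -- abbreviations
  set c : ℕ → ℂ := fun m => (m : ℂ) * (Complex.I * ω) with hc
  set e : ℕ → ℝ → ℂ := fun m t => α ^ m * Complex.exp ((m : ℂ) * Complex.I * ω * t) with he
  have hct : ∀ (m : ℕ) (t : ℝ), (m : ℂ) * Complex.I * ω * t = c m * t := by
    intro m t; simp only [hc]; ring
  refine ⟨fun t => ∑ m ∈ Finset.Icc 1 M, (c m * e m t) • G m, ?_, ?_⟩
  · -- differentiability
    intro t i
    have hfun : (fun τ : ℝ => x τ i)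
        = fun τ : ℝ => ∑ m ∈ Finset.Icc 1 M,
            α ^ m * Complex.exp ((m : ℂ) * Complex.I * ω * τ) * G m i :=
      funext fun τ => hx τ i
    rw [hfun]
    have hval : (∑ m ∈ Finset.Icc 1 M, (c m * e m t) • G m) i
        = ∑ m ∈ Finset.Icc 1 M, (c m * e m t) * G m i := by
      simp [Finset.sum_apply]
    beta_reduce
    rw [hval]
    refine HasDerivAt.fun_sum fun m _ => ?_
    have h0 : HasDerivAt (fun z : ℂ => Complex.exp (c m * z))
        (c m * Complex.exp (c m * (t : ℂ))) (t : ℂ) := by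
      have h00 := (Complex.hasDerivAt_exp (c m * (t : ℂ))).comp (t : ℂ)
        ((hasDerivAt_id ((t : ℂ))).const_mul (c m))
      simpa [Function.comp_def, mul_comm] using h00
    have h1 : HasDerivAt (fun τ : ℝ => Complex.exp (c m * (τ : ℂ)))
        (c m * Complex.exp (c m * (t : ℂ))) t := h0.comp_ofReal
    have h2 := (h1.const_mul (α ^ m)).mul_const (G m i)
    have hfun2 : (fun τ : ℝ => α ^ m * Complex.exp ((m : ℂ) * Complex.I * ω * τ) * G m i)
        = fun τ : ℝ => α ^ m * Complex.exp (c m * (τ : ℂ)) * G m i := by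
      funext τ; rw [hct]
    rw [hfun2]
    refine h2.congr_deriv ?_
    simp only [he, hct]
    ring
  · -- the algebraic identity
    intro t
    -- x t as a combination of the G m
    have hxe : x t = ∑ m ∈ Finset.Icc 1 M, e m t • G m := by
      funext i
      rw [hx]
      simp [Finset.sum_apply, he, mul_assoc]
    -- harmonic balance for each m
    have hbal : ∀ m ∈ Finset.Icc 1 M, (c m • E - A).mulVec (G m)
        = if m = 1 then B
          else Q.mulVec (∑ k ∈ Finset.Icc 1 (m - 1), kron (G k) (G (m - k))) := by
      intro m hm
      have hm' := Finset.mem_Icc.mp hm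
      have hu : IsUnit (c m • E - A).det := hinv m hm
      rcases eq_or_lt_of_le hm'.1 with h1 | h2
      · have h1' : m = 1 := h1.symm
        subst h1'
        rw [if_pos rfl]
        have hc1 : c 1 = Complex.I * (ω : ℂ) := by simp [hc]
        rw [hG1, hc1]
        rw [hc1] at hu
        exact inv_cancel' _ hu B
      · rw [if_neg (by omega)]
        rw [hGm m (by omega) hm'.2]
        exact inv_cancel' _ hu _
    -- LHS
    have hL : E.mulVec (∑ m ∈ Finset.Icc 1 M, (c m * e m t) • G m)
        = ∑ m ∈ Finset.Icc 1 M, e m t • ((c m • E).mulVec (G m)) := by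
      rw [mulVec_sum'']
      refine Finset.sum_congr rfl fun m _ => ?_
      rw [Matrix.mulVec_smul, Matrix.smul_mulVec, smul_smul, mul_comm]
    have hA : A.mulVec (x t) = ∑ m ∈ Finset.Icc 1 M, e m t • A.mulVec (G m) := by
      rw [hxe, mulVec_sum'']
      exact Finset.sum_congr rfl fun m _ => Matrix.mulVec_smul _ _ _
    -- E x' - A x
    have hEA : E.mulVec (∑ m ∈ Finset.Icc 1 M, (c m * e m t) • G m) - A.mulVec (x t)
        = ∑ m ∈ Finset.Icc 1 M, e m t • ((c m • E - A).mulVec (G m)) := by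
      rw [hL, hA, ← Finset.sum_sub_distrib]
      refine Finset.sum_congr rfl fun m _ => ?_
      rw [Matrix.sub_mulVec, smul_sub]
    -- kron expansion
    have hkron : kron (x t) (x t)
        = ∑ m ∈ Finset.Icc 1 M, ∑ k ∈ Finset.Icc 1 M,
            (e m t * e k t) • kron (G m) (G k) := by
      funext p
      have : kron (x t) (x t) p = x t p.1 * x t p.2 := rfl
      rw [this, hx, hx, Finset.sum_mul_sum]
      simp only [Finset.sum_apply, Pi.smul_apply, smul_eq_mul, he, kron]
      refine Finset.sum_congr rfl fun m _ => Finset.sum_congr rfl fun k _ => by ring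
    have hee : ∀ m k : ℕ, e m t * e k t = e (m + k) t := by
      intro m k
      simp only [he]
      rw [show ((m + k : ℕ) : ℂ) * Complex.I * ω * t
          = (m : ℂ) * Complex.I * ω * t + (k : ℂ) * Complex.I * ω * t by push_cast; ring,
        Complex.exp_add, pow_add]
      ring
    -- Q applied to kron, as a double sum
    have hQ1 : Q.mulVec (kron (x t) (x t))
        = ∑ p ∈ Finset.Icc 1 M ×ˢ Finset.Icc 1 M,
            e (p.1 + p.2) t • Q.mulVec (kron (G p.1) (G p.2)) := by
      rw [hkron, mulVec_sum'']
      rw [Finset.sum_product]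
      refine Finset.sum_congr rfl fun m _ => ?_
      rw [mulVec_sum'']
      refine Finset.sum_congr rfl fun k _ => ?_
      rw [Matrix.mulVec_smul, hee]
    -- reindex the double sum by total harmonic order
    have hre : ∑ p ∈ Finset.Icc 1 M ×ˢ Finset.Icc 1 M,
            e (p.1 + p.2) t • Q.mulVec (kron (G p.1) (G p.2))
        = ∑ s ∈ Finset.Icc 2 (2 * M), ∑ k ∈ Finset.Icc (max 1 (s - M)) (min (s - 1) M),
            e s t • Q.mulVec (kron (G k) (G (s - k))) := by
      rw [Finset.sum_sigma']
      refine Finset.sum_nbij' (fun p => ⟨p.1 + p.2, p.1⟩) (fun q => (q.2, q.1 - q.2))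
        ?_ ?_ ?_ ?_ ?_
      · intro a ha
        simp only [Finset.mem_product, Finset.mem_Icc] at ha
        simp only [Finset.mem_sigma, Finset.mem_Icc]
        omega
      · intro a ha
        simp only [Finset.mem_sigma, Finset.mem_Icc] at ha
        simp only [Finset.mem_product, Finset.mem_Icc]
        omega
      · intro a ha
        simp only [Finset.mem_product, Finset.mem_Icc] at ha
        have h' : a.1 + a.2 - a.1 = a.2 := by omega
        simp [h']
      · intro a ha
        simp only [Finset.mem_sigma, Finset.mem_Icc] at ha
        obtain ⟨s, k⟩ := a
        simp only at ha ⊢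
        congr 1
        omega
      · intro a ha
        simp only [Finset.mem_product, Finset.mem_Icc] at ha
        have : a.1 + a.2 - a.1 = a.2 := by omega
        rw [this]
    -- split at M
    have hun : Finset.Icc 2 M ∪ Finset.Icc (M + 1) (2 * M) = Finset.Icc 2 (2 * M) := by
      ext a; simp only [Finset.mem_union, Finset.mem_Icc]; omega
    have hdis : Disjoint (Finset.Icc 2 M) (Finset.Icc (M + 1) (2 * M)) := by
      rw [Finset.disjoint_left]
      intro a ha hb
      simp only [Finset.mem_Icc] at ha hb
      omega
    have hsplit : ∑ s ∈ Finset.Icc 2 (2 * M),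
            ∑ k ∈ Finset.Icc (max 1 (s - M)) (min (s - 1) M),
              e s t • Q.mulVec (kron (G k) (G (s - k)))
        = (∑ s ∈ Finset.Icc 2 M, e s t •
              Q.mulVec (∑ k ∈ Finset.Icc 1 (s - 1), kron (G k) (G (s - k))))
          + ∑ s ∈ Finset.Icc (M + 1) (2 * M), e s t •
              Q.mulVec (∑ k ∈ Finset.Icc (s - M) M, kron (G k) (G (s - k))) := by
      rw [← hun, Finset.sum_union hdis]
      congr 1
      · refine Finset.sum_congr rfl fun s hs => ?_
        simp only [Finset.mem_Icc] at hs
        rw [show max 1 (s - M) = 1 by omega, show min (s - 1) M = s - 1 by omega,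
          mulVec_sum'', Finset.smul_sum]
      · refine Finset.sum_congr rfl fun s hs => ?_
        simp only [Finset.mem_Icc] at hs
        rw [show max 1 (s - M) = s - M by omega, show min (s - 1) M = M by omega,
          mulVec_sum'', Finset.smul_sum]
    -- split the balanced sum at 1
    have hun1 : Finset.Icc 1 1 ∪ Finset.Icc 2 M = Finset.Icc 1 M := by
      ext a; simp only [Finset.mem_union, Finset.mem_Icc]; omega
    have hdis1 : Disjoint (Finset.Icc 1 1) (Finset.Icc 2 M) := by
      rw [Finset.disjoint_left]
      intro a ha hb
      simp only [Finset.mem_Icc] at ha hb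
      omega
    have hsum1 : ∑ m ∈ Finset.Icc 1 M, e m t • ((c m • E - A).mulVec (G m))
        = e 1 t • B
          + ∑ s ∈ Finset.Icc 2 M, e s t •
              Q.mulVec (∑ k ∈ Finset.Icc 1 (s - 1), kron (G k) (G (s - k))) := by
      have hsc : ∀ m ∈ Finset.Icc 1 M, e m t • ((c m • E - A).mulVec (G m))
          = e m t • (if m = 1 then B
            else Q.mulVec (∑ k ∈ Finset.Icc 1 (m - 1), kron (G k) (G (m - k)))) :=
        fun m hm => by rw [hbal m hm]
      rw [Finset.sum_congr rfl hsc, ← hun1, Finset.sum_union hdis1, Finset.Icc_self,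
        Finset.sum_singleton, if_pos rfl]
      congr 1
      refine Finset.sum_congr rfl fun s hs => ?_
      simp only [Finset.mem_Icc] at hs
      rw [if_neg (by omega)]
    have he1 : e 1 t = α * Complex.exp (Complex.I * ω * t) := by
      simp [he]
    -- assemble
    have hE2 := eq_add_of_sub_eq hEA
    rw [hsum1] at hE2
    have hQtot : Q.mulVec (kron (x t) (x t))
        = (∑ s ∈ Finset.Icc 2 M, e s t •
              Q.mulVec (∑ k ∈ Finset.Icc 1 (s - 1), kron (G k) (G (s - k))))
          + ∑ s ∈ Finset.Icc (M + 1) (2 * M), e s t •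
              Q.mulVec (∑ k ∈ Finset.Icc (s - M) M, kron (G k) (G (s - k))) := by
      rw [hQ1, hre, hsplit]
    beta_reduce
    rw [hQtot, ← he1, hE2]
    simp only [he]
    abel
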